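/- arXiv:2312.13270 — 3 statements merged into one kernel-verified Lean document; each statement's English description precedes it below -/
import Mathlib

section
/- Every λpar-reduction step is simulated by one or more λsub-steps under the translation ◦: if t →_{λpar} t' for λ-terms t, t', then t° →⁺_{λsub} t'°. -/
/-! # Λ-terms with explicit substitutions (λsub calculus) -/

inductive Tm : Type
  | var : ℕ → Tm
  | app : Tm → Tm → Tm
  | lam : ℕ → Tm → Tm
  | esub : ℕ → Tm → Tm → Tm   -- esub x t u  is  t[x/u]
  deriving DecidableEq

namespace Tm

/-- free variables -/
def fv : Tm → Finset ℕ
  | var x => {x}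
  | app t u => fv t ∪ fv u
  | lam x t => fv t \ {x}
  | esub x t u => (fv t \ {x}) ∪ fv u

/-- implicit (capture-avoiding, under the bound-variable convention) substitution -/
def subst (x : ℕ) (v : Tm) : Tm → Tm
  | var y => if y = x then v else var y
  | app t u => app (subst x v t) (subst x v u)
  | lam y t => lam y (subst x v t)
  | esub y t u => esub y (subst x v t) (subst x v u)

/-- `Repl x u t t'` : `t'` is obtained from `t` by replacing exactly one free
occurrence of `x` by `u`, without capture of `x` or the free variables of `u`. -/
inductive Repl (x : ℕ) (u : Tm) : Tm → Tm → Prop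
  | var : Repl x u (var x) u
  | appL {t t' s} : Repl x u t t' → Repl x u (app t s) (app t' s)
  | appR {t s s'} : Repl x u s s' → Repl x u (app t s) (app t s')
  | lam {y t t'} : y ≠ x → y ∉ fv u → Repl x u t t' → Repl x u (lam y t) (lam y t')
  | esubL {y t t' s} : y ≠ x → y ∉ fv u → Repl x u t t' → Repl x u (esub y t s) (esub y t' s)
  | esubR {y t s s'} : Repl x u s s' → Repl x u (esub y t s) (esub y t s')

/-- root reduction rules of λsub: B, Gc, R -/
inductive LsubRoot : Tm → Tm → Prop
  | B {x t u} : LsubRoot (app (lam x t) u) (esub x t u)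
  | Gc {x t u} : x ∉ fv t → LsubRoot (esub x t u) t
  | R {x t t' u} : Repl x u t t' → LsubRoot (esub x t u) (esub x t' u)

/-- root rules of the substitution subcalculus: Gc, R -/
inductive SubRoot : Tm → Tm → Prop
  | Gc {x t u} : x ∉ fv t → SubRoot (esub x t u) t
  | R {x t t' u} : Repl x u t t' → SubRoot (esub x t u) (esub x t' u)

/-- root rule B only -/
inductive BRoot : Tm → Tm → Prop
  | B {x t u} : BRoot (app (lam x t) u) (esub x t u)

/-- root β-rule (full implicit substitution) -/
inductive BetaRoot : Tm → Tm → Prop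
  | beta {x t u} : BetaRoot (app (lam x t) u) (subst x u t)

/-- root rules of the partial λpar-calculus: β_p and BGc -/
inductive LparRoot : Tm → Tm → Prop
  | betaP {x t t' u} : Repl x u t t' → LparRoot (app (lam x t) u) (app (lam x t') u)
  | BGc {x t u} : x ∉ fv t → LparRoot (app (lam x t) u) t

/-- closure of a root relation under all contexts -/
inductive Ctx (r : Tm → Tm → Prop) : Tm → Tm → Prop
  | root {t t'} : r t t' → Ctx r t t'
  | appL {t t' s} : Ctx r t t' → Ctx r (app t s) (app t' s)
  | appR {t s s'} : Ctx r s s' → Ctx r (app t s) (app t s')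
  | lam {y t t'} : Ctx r t t' → Ctx r (lam y t) (lam y t')
  | esubL {y t t' s} : Ctx r t t' → Ctx r (esub y t s) (esub y t' s)
  | esubR {y t s s'} : Ctx r s s' → Ctx r (esub y t s) (esub y t s')

def LsubStep : Tm → Tm → Prop := Ctx LsubRoot
def SubStep : Tm → Tm → Prop := Ctx SubRoot
def BStep : Tm → Tm → Prop := Ctx BRoot
def BetaStep : Tm → Tm → Prop := Ctx BetaRoot
def LparStep : Tm → Tm → Prop := Ctx LparRoot
/-- λdef: λsub rules together with full β -/
def LdefStep : Tm → Tm → Prop := Ctx (fun a b => LsubRoot a b ∨ BetaRoot a b)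

/-- pure λ-terms: no explicit substitution -/
def IsPure : Tm → Prop
  | var _ => True
  | app t u => IsPure t ∧ IsPure u
  | lam _ t => IsPure t
  | esub _ _ _ => False

/-- strong normalisation of `t` for the relation `r` -/
def SN (r : Tm → Tm → Prop) (t : Tm) : Prop := Acc (fun a b => r b a) t

/-- translation ° from λ-terms to Λ-terms -/
def parlm : Tm → Tm
  | var x => var x
  | lam x t => lam x (parlm t)
  | esub x t u => esub x (parlm t) (parlm u)
  | app (lam x v) u => esub x (parlm v) (parlm u)
  | app (var x) u => app (var x) (parlm u)
  | app (app a b) u => app (parlm (app a b)) (parlm u)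
  | app (esub y a b) u => app (parlm (esub y a b)) (parlm u)

/-- unfolding ⌊·⌋ from Λ-terms to λ-terms -/
def unf : Tm → Tm
  | var x => var x
  | app t u => app (unf t) (unf u)
  | lam x t => lam x (unf t)
  | esub x t u => app (lam x (unf t)) (unf u)

end Tm

/-! # Λ-metaterms -/

inductive MTm : Type
  | var : ℕ → MTm
  | mvar : Finset ℕ → MTm
  | app : MTm → MTm → MTm
  | lam : ℕ → MTm → MTm
  | esub : ℕ → MTm → MTm → MTm

namespace MTm

def fv : MTm → Finset ℕ
  | var x => {x}
  | mvar Δ => Δ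
  | app t u => fv t ∪ fv u
  | lam x t => fv t \ {x}
  | esub x t u => (fv t \ {x}) ∪ fv u

/-- replacement of exactly one free occurrence of the variable x by u -/
inductive MRepl (x : ℕ) (u : MTm) : MTm → MTm → Prop
  | var : MRepl x u (var x) u
  | appL {t t' s} : MRepl x u t t' → MRepl x u (app t s) (app t' s)
  | appR {t s s'} : MRepl x u s s' → MRepl x u (app t s) (app t s')
  | lam {y t t'} : y ≠ x → y ∉ fv u → MRepl x u t t' → MRepl x u (lam y t) (lam y t')
  | esubL {y t t' s} : y ≠ x → y ∉ fv u → MRepl x u t t' → MRepl x u (esub y t s) (esub y t' s)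
  | esubR {y t s s'} : MRepl x u s s' → MRepl x u (esub y t s) (esub y t s')

/-- `MReplX x Δ u b t t'` : `t'` is obtained from `t` by replacing one occurrence of the
metavariable `X_Δ` by `X_Δ[x/u]`, at a position which is *not* on the left spine of
substitutions starting from the attached substitution (flag `b = true` means the current
position is still on that spine, where attaching is forbidden). -/
inductive MReplX (x : ℕ) (Δ : Finset ℕ) (u : MTm) : Bool → MTm → MTm → Prop
  | mvar : MReplX x Δ u false (mvar Δ) (esub x (mvar Δ) u)
  | appL {b t t' s} : MReplX x Δ u false t t' → MReplX x Δ u b (app t s) (app t' s)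
  | appR {b t s s'} : MReplX x Δ u false s s' → MReplX x Δ u b (app t s) (app t s')
  | lam {b y t t'} : y ≠ x → y ∉ fv u → MReplX x Δ u false t t' →
      MReplX x Δ u b (lam y t) (lam y t')
  | esubL {b y t t' s} : y ≠ x → y ∉ fv u → MReplX x Δ u b t t' →
      MReplX x Δ u b (esub y t s) (esub y t' s)
  | esubR {b y t s s'} : MReplX x Δ u false s s' → MReplX x Δ u b (esub y t s) (esub y t s')

/-- root rules of the substitution calculus `sub` on metaterms: Gc, R, R_X -/
inductive MSubRoot : MTm → MTm → Prop
  | Gc {x t u} : x ∉ fv t → MSubRoot (esub x t u) t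
  | R {x t t' u} : MRepl x u t t' → MSubRoot (esub x t u) (esub x t' u)
  | RX {x Δ t t' u} : x ∈ Δ → MReplX x Δ u true t t' → MSubRoot (esub x t u) (esub x t' u)

inductive MCtx (r : MTm → MTm → Prop) : MTm → MTm → Prop
  | root {t t'} : r t t' → MCtx r t t'
  | appL {t t' s} : MCtx r t t' → MCtx r (app t s) (app t' s)
  | appR {t s s'} : MCtx r s s' → MCtx r (app t s) (app t s')
  | lam {y t t'} : MCtx r t t' → MCtx r (lam y t) (lam y t')
  | esubL {y t t' s} : MCtx r t t' → MCtx r (esub y t s) (esub y t' s)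
  | esubR {y t s s'} : MCtx r s s' → MCtx r (esub y t s) (esub y t s')

/-- one-step sub-reduction on metaterms -/
def MSubStep : MTm → MTm → Prop := MCtx MSubRoot

/-- the commutation equivalence =_C of independent substitutions -/
inductive MCEq : MTm → MTm → Prop
  | comm {x y t u v} : x ≠ y → y ∉ fv u → x ∉ fv v →
      MCEq (esub y (esub x t u) v) (esub x (esub y t v) u)
  | refl (t) : MCEq t t
  | symm {t t'} : MCEq t t' → MCEq t' t
  | trans {t t' t''} : MCEq t t' → MCEq t' t'' → MCEq t t''
  | appL {t t' s} : MCEq t t' → MCEq (app t s) (app t' s)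
  | appR {t s s'} : MCEq s s' → MCEq (app t s) (app t s')
  | lam {y t t'} : MCEq t t' → MCEq (lam y t) (lam y t')
  | esubL {y t t' s} : MCEq t t' → MCEq (esub y t s) (esub y t' s)
  | esubR {y t s s'} : MCEq s s' → MCEq (esub y t s) (esub y t s')

/-- `spineMem y t = true` iff `t` is of the form `X_Δ[x₁/u₁]…[xₙ/uₙ]` with `y ∈ Δ`. -/
def spineMem (y : ℕ) : MTm → Bool
  | mvar Δ => decide (y ∈ Δ)
  | esub _ t _ => spineMem y t
  | _ => false

/-- the occurrence-counting measure m -/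
def m : MTm → ℕ → ℕ
  | var y, x => if y = x then 1 else 0
  | mvar Δ, x => if x ∈ Δ then 1 else 0
  | app t u, x => m t x + m u x
  | lam _ t, x => m t x
  | esub y t u, x =>
      if spineMem y t then m t x + m t y * m u x
      else m t x + m u x + m t y * m u x

/-- the size measure s -/
def s : MTm → ℕ
  | var _ => 1
  | mvar Δ => Δ.card
  | app t u => s t + s u
  | lam _ t => s t
  | esub x t u =>
      if spineMem x t then s t - 1 + m t x * s u
      else s t + s u + m t x * s u

/-- implicit (capture-avoiding) substitution on metaterms; on a metavariable containing
`x` it attaches an explicit substitution -/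
def msubst (x : ℕ) (v : MTm) : MTm → MTm
  | var y => if y = x then v else var y
  | mvar Δ => if x ∈ Δ then esub x (mvar Δ) v else mvar Δ
  | app t u => app (msubst x v t) (msubst x v u)
  | lam y t => lam y (msubst x v t)
  | esub y t u => esub y (msubst x v t) (msubst x v u)

/-- normal form for a relation -/
def NF (r : MTm → MTm → Prop) (t : MTm) : Prop := ∀ u, ¬ r t u

end MTm

/-! # Types -/

inductive Ty : Type
  | base : ℕ → Ty
  | arrow : Ty → Ty → Ty
  | inter : Ty → Ty → Ty
  deriving DecidableEq

namespace Ty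

/-- the preorder ≪ on intersection types -/
inductive Le : Ty → Ty → Prop
  | refl (A) : Le A A
  | interL {A B} : Le (inter A B) A
  | interR {A B} : Le (inter A B) B
  | trans {A B C} : Le A B → Le B C → Le A C
  | pair {A B C} : Le A B → Le A C → Le A (inter B C)

/-- a type which is not an intersection -/
def IsInterFree : Ty → Prop
  | inter _ _ => False
  | _ => True

/-- A₁ ∩ … ∩ Aₙ -/
def bigInter (A : Ty) (l : List Ty) : Ty := l.foldl inter A

end Ty

abbrev Env := ℕ → Option Ty

/-- environment update Γ, x:A -/
def Env.upd (Γ : Env) (x : ℕ) (A : Ty) : Env := fun y => if y = x then some A else Γ y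

/-- the additive intersection type system add^i for Λ-terms -/
inductive Der : Env → Tm → Ty → Prop
  | ax {Γ x A} : Γ x = some A → Der Γ (Tm.var x) A
  | app {Γ t u A B} : Der Γ t (Ty.arrow A B) → Der Γ u A → Der Γ (Tm.app t u) B
  | abs {Γ x t A B} : Der (Γ.upd x A) t B → Der Γ (Tm.lam x t) (Ty.arrow A B)
  | subs {Γ x t u A B} : Der Γ u B → Der (Γ.upd x B) t A → Der Γ (Tm.esub x t u) A
  | interI {Γ t A B} : Der Γ t A → Der Γ t B → Der Γ t (Ty.inter A B)
  | interE1 {Γ t A B} : Der Γ t (Ty.inter A B) → Der Γ t A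
  | interE2 {Γ t A B} : Der Γ t (Ty.inter A B) → Der Γ t B

/-! # Simple types -/

inductive STy : Type
  | base : ℕ → STy
  | arrow : STy → STy → STy
  deriving DecidableEq

abbrev SEnv := ℕ → Option STy

def SEnv.upd (Γ : SEnv) (x : ℕ) (A : STy) : SEnv := fun y => if y = x then some A else Γ y

/-- the additive simple type system for λ-terms -/
inductive SDer : SEnv → Tm → STy → Prop
  | ax {Γ x A} : Γ x = some A → SDer Γ (Tm.var x) A
  | app {Γ t u A B} : SDer Γ t (STy.arrow A B) → SDer Γ u A → SDer Γ (Tm.app t u) B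
  | abs {Γ x t A B} : SDer (Γ.upd x A) t B → SDer Γ (Tm.lam x t) (STy.arrow A B)

/-! The translation contracts the B-redexes of a λ-term up front: `(t u)°` is `t° u°` with its
root B-redex, if any, contracted. A β_p-step on `(λx.C⟨x⟩) u` thus becomes one R-step on
`C°[x/u°]`, followed by the B-steps that fire where the substituted `u°` is an abstraction in
head position; a BGc-step becomes a Gc-step, since `°` preserves free variables. A step in the
function position of an application is simulated either inside the explicit substitution that
`°` made of the redex, or followed by the B-step that the step creates. -/

namespace Tm

open Relation

theorem fv_parlm (t : Tm) : fv (parlm t) = fv t := by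
  induction t with
  | var | lam | esub => simp_all [parlm, fv]
  | app t u iht ihu => cases t <;> simp_all [parlm, fv]

/-- Application with its root B-redex contracted. -/
def bApp : Tm → Tm → Tm
  | lam x t, u => esub x t u
  | t, u => app t u

theorem parlm_app (t u : Tm) : parlm (app t u) = bApp (parlm t) (parlm u) := by
  cases t with
  | app a b => cases a <;> rfl
  | _ => rfl

theorem reflTransGen_app_bApp (t u : Tm) : ReflTransGen LsubStep (app t u) (bApp t u) := by
  cases t
  case lam => exact .single (.root .B)
  all_goals exact .refl

theorem Ctx.bApp_right {r : Tm → Tm → Prop} {t u u' : Tm} (h : Ctx r u u') :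
    Ctx r (bApp t u) (bApp t u') := by
  cases t
  case lam => exact .esubR h
  all_goals exact .appR h

theorem LsubStep.bApp_left {t t' u : Tm} (h : LsubStep t t') :
    TransGen LsubStep (bApp t u) (bApp t' u) := by
  cases t
  case lam =>
    cases h with
    | root r => nomatch r
    | lam h => exact .single (.esubL h)
  all_goals exact (TransGen.single (.appL h)).trans_left (reflTransGen_app_bApp _ _)

theorem Repl.bApp_right {x : ℕ} {v t s s' : Tm} (h : Repl x v s s') :
    Repl x v (bApp t s) (bApp t s') := by
  cases t
  case lam => exact .esubR h
  all_goals exact .appR h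

theorem Repl.bApp_left {x : ℕ} {v t w s : Tm} (h : Repl x v t w) :
    ∃ w', Repl x v (bApp t s) w' ∧ ReflTransGen LsubStep w' (bApp w s) := by
  cases t
  case lam =>
    cases h with
    | lam hy hyv h => exact ⟨_, .esubL hy hyv h, .refl⟩
  all_goals exact ⟨_, .appL h, reflTransGen_app_bApp _ _⟩

theorem Repl.exists_parlm {x : ℕ} {u t t' : Tm} (h : Repl x u t t') :
    ∃ w, Repl x (parlm u) (parlm t) w ∧ ReflTransGen LsubStep w (parlm t') := by
  induction h with
  | var => exact ⟨_, .var, .refl⟩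
  | @appL t t' s _ ih =>
    obtain ⟨w, hw, hwt⟩ := ih
    obtain ⟨w', hw', hw'w⟩ := hw.bApp_left (s := parlm s)
    simp only [parlm_app]
    exact ⟨w', hw', hw'w.trans <|
      ReflTransGen.lift' (bApp · _) (fun _ _ h => h.bApp_left.to_reflTransGen) _ _ hwt⟩
  | appR _ ih =>
    obtain ⟨w, hw, hws⟩ := ih
    simp only [parlm_app]
    exact ⟨_, hw.bApp_right, ReflTransGen.lift (bApp _) (fun _ _ h => Ctx.bApp_right h) _ _ hws⟩
  | @lam y _ _ hy hyu _ ih =>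
    obtain ⟨w, hw, hwt⟩ := ih
    exact ⟨_, .lam hy (by rwa [fv_parlm]) hw,
      ReflTransGen.lift (Tm.lam y) (fun _ _ h => Ctx.lam h) _ _ hwt⟩
  | @esubL y _ _ s hy hyu _ ih =>
    obtain ⟨w, hw, hwt⟩ := ih
    exact ⟨_, .esubL hy (by rwa [fv_parlm]) hw,
      ReflTransGen.lift (esub y · (parlm s)) (fun _ _ h => Ctx.esubL h) _ _ hwt⟩
  | @esubR y t _ _ _ ih =>
    obtain ⟨w, hw, hws⟩ := ih
    exact ⟨_, .esubR hw,
      ReflTransGen.lift (esub y (parlm t)) (fun _ _ h => Ctx.esubR h) _ _ hws⟩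

theorem LparRoot.transGen_parlm {t t' : Tm} (h : LparRoot t t') :
    TransGen LsubStep (parlm t) (parlm t') := by
  cases h with
  | betaP h =>
    obtain ⟨w, hw, hwt⟩ := h.exists_parlm
    exact .head' (.root (.R hw))
      (ReflTransGen.lift (esub _ · _) (fun _ _ h => Ctx.esubL h) _ _ hwt)
  | BGc h => exact .single (.root (.Gc (by rwa [fv_parlm])))

end Tm

open Tm Relation in
theorem parlm_simulation_general (t t' : Tm) (h : Tm.LparStep t t') :
    Relation.TransGen Tm.LsubStep (Tm.parlm t) (Tm.parlm t') := by
  induction h with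
  | root h => exact h.transGen_parlm
  | appL _ ih =>
    simp only [parlm_app]
    exact TransGen.lift' (bApp · _) (fun _ _ h => LsubStep.bApp_left h) _ _ ih
  | appR _ ih =>
    simp only [parlm_app]
    exact TransGen.lift (bApp _) (fun _ _ h => Ctx.bApp_right h) _ _ ih
  | lam _ ih => exact TransGen.lift (lam _) (fun _ _ h => Ctx.lam h) _ _ ih
  | esubL _ ih => exact TransGen.lift (esub _ · _) (fun _ _ h => Ctx.esubL h) _ _ ih
  | esubR _ ih => exact TransGen.lift (esub _ _) (fun _ _ h => Ctx.esubR h) _ _ ih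

/-- the translation ° maps each λpar-step to a non-empty
λsub-reduction sequence -/
theorem parlm_simulation (t t' : Tm) (hpure : Tm.IsPure t) (h : Tm.LparStep t t') :
    Relation.TransGen Tm.LsubStep (Tm.parlm t) (Tm.parlm t') :=
  parlm_simulation_general t t' h
end

section
/- For pure λ-terms, strong normalisation in λpar and λsub coincide: t is λpar-strongly normalising if and only if t is λsub-strongly normalising. -/
/-!
The unfolding `⌊·⌋` sends every `sub`-step to a `λpar`-step and is invariant under `B`-steps,
which decrease the number of applications. So an infinite `λsub`-reduction from `t` unfolds to an
infinite `λpar`-reduction from `⌊t⌋`, and `⌊t⌋ = t` for pure `t`.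

Conversely, a pure term `t` reduces by `B`-steps to `t°`, and every `λpar`-step `t → t'` between
pure terms is simulated by a nonempty `λsub`-reduction `t° →⁺ t'°`; so an infinite
`λpar`-reduction from `t` yields an infinite `λsub`-reduction from `t`.
-/

open Relation

theorem Acc.of_lex_simulation {α β : Type*} {r : α → α → Prop} {s : β → β → Prop}
    (f : α → β) (g : α → ℕ) (hsim : ∀ a b, r a b → f b = f a ∧ g b < g a ∨ s (f a) (f b))
    {a : α} (ha : Acc (fun x y => s y x) (f a)) : Acc (fun x y => r y x) a := by
  generalize hu : f a = u at ha
  induction ha generalizing a with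
  | intro u _ ihu =>
    induction a using (measure g).wf.induction with
    | _ a iha =>
      refine Acc.intro a fun b hab => ?_
      rcases hsim a b hab with ⟨hfb, hg⟩ | hs
      · exact iha b hg (hfb.trans hu)
      · exact ihu _ (hu ▸ hs) rfl

theorem Acc.of_transGen_simulation {α β : Type*} {r : α → α → Prop} {s : β → β → Prop}
    (P : α → Prop) (f : α → β) (hP : ∀ a b, P a → r a b → P b)
    (hsim : ∀ a b, P a → r a b → TransGen s (f a) (f b))
    {a : α} (hPa : P a) (ha : Acc (fun x y => s y x) (f a)) : Acc (fun x y => r y x) a := by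
  have hacc := ha.transGen
  clear ha
  generalize hu : f a = u at hacc
  induction hacc generalizing a with
  | intro u _ ihu =>
    subst hu
    exact Acc.intro _ fun b hab => ihu _ (transGen_swap.mpr (hsim a b hPa hab)) (hP a b hPa hab) rfl

theorem Acc.of_reflTransGen {α : Type*} {r : α → α → Prop} {a b : α}
    (ha : Acc (fun x y => r y x) a) (hab : ReflTransGen r a b) : Acc (fun x y => r y x) b := by
  rcases reflTransGen_iff_eq_or_transGen.mp hab with rfl | hab
  · exact ha
  · exact ha.inv_of_transGen (transGen_swap.mpr hab)

namespace Tm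

theorem Ctx.mono {r r' : Tm → Tm → Prop} (h : r ≤ r') {a b : Tm} (hab : Ctx r a b) :
    Ctx r' a b := by
  induction hab with
  | root h' => exact Ctx.root (h _ _ h')
  | appL _ ih => exact Ctx.appL ih
  | appR _ ih => exact Ctx.appR ih
  | lam _ ih => exact Ctx.lam ih
  | esubL _ ih => exact Ctx.esubL ih
  | esubR _ ih => exact Ctx.esubR ih

section ContextClosure

variable {r : Tm → Tm → Prop} {a b : Tm}

theorem Ctx.reflTransGen_lam (y : ℕ) (h : ReflTransGen (Ctx r) a b) :
    ReflTransGen (Ctx r) (Tm.lam y a) (Tm.lam y b) :=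
  ReflTransGen.lift (Tm.lam y) (fun _ _ => Ctx.lam) _ _ h

theorem Ctx.reflTransGen_appL (s : Tm) (h : ReflTransGen (Ctx r) a b) :
    ReflTransGen (Ctx r) (app a s) (app b s) :=
  ReflTransGen.lift (Tm.app · s) (fun _ _ => Ctx.appL) _ _ h

theorem Ctx.reflTransGen_appR (s : Tm) (h : ReflTransGen (Ctx r) a b) :
    ReflTransGen (Ctx r) (app s a) (app s b) :=
  ReflTransGen.lift (Tm.app s) (fun _ _ => Ctx.appR) _ _ h

theorem Ctx.reflTransGen_esubL (y : ℕ) (s : Tm) (h : ReflTransGen (Ctx r) a b) :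
    ReflTransGen (Ctx r) (esub y a s) (esub y b s) :=
  ReflTransGen.lift (Tm.esub y · s) (fun _ _ => Ctx.esubL) _ _ h

theorem Ctx.reflTransGen_esubR (y : ℕ) (s : Tm) (h : ReflTransGen (Ctx r) a b) :
    ReflTransGen (Ctx r) (esub y s a) (esub y s b) :=
  ReflTransGen.lift (Tm.esub y s) (fun _ _ => Ctx.esubR) _ _ h

theorem Ctx.transGen_lam (y : ℕ) (h : TransGen (Ctx r) a b) :
    TransGen (Ctx r) (Tm.lam y a) (Tm.lam y b) :=
  TransGen.lift (Tm.lam y) (fun _ _ => Ctx.lam) _ _ h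

theorem Ctx.transGen_appL (s : Tm) (h : TransGen (Ctx r) a b) :
    TransGen (Ctx r) (app a s) (app b s) :=
  TransGen.lift (Tm.app · s) (fun _ _ => Ctx.appL) _ _ h

theorem Ctx.transGen_appR (s : Tm) (h : TransGen (Ctx r) a b) :
    TransGen (Ctx r) (app s a) (app s b) :=
  TransGen.lift (Tm.app s) (fun _ _ => Ctx.appR) _ _ h

theorem Ctx.transGen_esubL (y : ℕ) (s : Tm) (h : TransGen (Ctx r) a b) :
    TransGen (Ctx r) (esub y a s) (esub y b s) :=
  TransGen.lift (Tm.esub y · s) (fun _ _ => Ctx.esubL) _ _ h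

theorem Ctx.transGen_esubR (y : ℕ) (s : Tm) (h : TransGen (Ctx r) a b) :
    TransGen (Ctx r) (esub y s a) (esub y s b) :=
  TransGen.lift (Tm.esub y s) (fun _ _ => Ctx.esubR) _ _ h

end ContextClosure

theorem BStep.lsubStep {a b : Tm} (h : BStep a b) : LsubStep a b :=
  Ctx.mono (fun _ _ h' => by cases h'; exact LsubRoot.B) h

theorem LsubStep.bStep_or_subStep {a b : Tm} (h : LsubStep a b) : BStep a b ∨ SubStep a b := by
  induction h with
  | root h' =>
    cases h' with
    | B => exact Or.inl (Ctx.root BRoot.B)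
    | Gc hx => exact Or.inr (Ctx.root (SubRoot.Gc hx))
    | R hr => exact Or.inr (Ctx.root (SubRoot.R hr))
  | appL _ ih => exact ih.imp Ctx.appL Ctx.appL
  | appR _ ih => exact ih.imp Ctx.appR Ctx.appR
  | lam _ ih => exact ih.imp Ctx.lam Ctx.lam
  | esubL _ ih => exact ih.imp Ctx.esubL Ctx.esubL
  | esubR _ ih => exact ih.imp Ctx.esubR Ctx.esubR

def appCount : Tm → ℕ
  | var _ => 0
  | app t u => appCount t + appCount u + 1
  | lam _ t => appCount t
  | esub _ t u => appCount t + appCount u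

theorem BStep.appCount_lt {a b : Tm} (h : BStep a b) : appCount b < appCount a := by
  induction h with
  | root r => cases r; simp [appCount]
  | appL _ ih | appR _ ih | lam _ ih | esubL _ ih | esubR _ ih => simp only [appCount]; omega

theorem fv_unf (t : Tm) : fv (unf t) = fv t := by
  induction t <;> simp_all [unf, fv]

theorem Repl.unf {x : ℕ} {u t t' : Tm} (h : Repl x u t t') :
    Repl x (unf u) (unf t) (unf t') := by
  induction h with
  | var => exact Repl.var
  | appL _ ih => exact Repl.appL ih
  | appR _ ih => exact Repl.appR ih
  | lam hy hyu _ ih => exact Repl.lam hy (by rwa [fv_unf]) ih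
  | esubL hy hyu _ ih => exact Repl.appL (Repl.lam hy (by rwa [fv_unf]) ih)
  | esubR _ ih => exact Repl.appR ih

theorem BStep.unf_eq {a b : Tm} (h : BStep a b) : unf b = unf a := by
  induction h with
  | root r => cases r; rfl
  | appL _ ih | appR _ ih | lam _ ih | esubL _ ih | esubR _ ih => simp [unf, ih]

theorem SubStep.lparStep_unf {a b : Tm} (h : SubStep a b) : LparStep (unf a) (unf b) := by
  induction h with
  | root r =>
    cases r with
    | Gc hx => exact Ctx.root (LparRoot.BGc (by rwa [fv_unf]))
    | R hr => exact Ctx.root (LparRoot.betaP hr.unf)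
  | appL _ ih => exact Ctx.appL ih
  | appR _ ih => exact Ctx.appR ih
  | lam _ ih => exact Ctx.lam ih
  | esubL _ ih => exact Ctx.appL (Ctx.lam ih)
  | esubR _ ih => exact Ctx.appR ih

theorem unf_of_isPure {t : Tm} (ht : IsPure t) : unf t = t := by
  induction t with
  | var x => rfl
  | app t u iht ihu => simp [unf, iht ht.1, ihu ht.2]
  | lam x t iht => simp [unf, iht ht]
  | esub x t u _ _ => exact ht.elim

theorem sn_lsub_of_sn_lpar_unf {t : Tm} (h : SN LparStep (unf t)) : SN LsubStep t :=
  Acc.of_lex_simulation unf appCount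
    (fun _ _ hab => (LsubStep.bStep_or_subStep hab).imp
      (fun hB => ⟨hB.unf_eq, hB.appCount_lt⟩) SubStep.lparStep_unf) h


theorem Repl.isPure {x : ℕ} {u t t' : Tm} (ht : IsPure t) (hu : IsPure u)
    (h : Repl x u t t') : IsPure t' := by
  induction h with
  | var => exact hu
  | appL _ ih => exact ⟨ih ht.1, ht.2⟩
  | appR _ ih => exact ⟨ht.1, ih ht.2⟩
  | lam _ _ _ ih => exact ih ht
  | esubL | esubR => exact ht.elim

theorem LparStep.isPure {t t' : Tm} (ht : IsPure t) (h : LparStep t t') : IsPure t' := by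
  induction h with
  | root r =>
    cases r with
    | @betaP _ v _ _ hr => exact ⟨(hr.isPure (show IsPure v from ht.1) ht.2 :), ht.2⟩
    | BGc _ => exact ht.1
  | appL _ ih => exact ⟨ih ht.1, ht.2⟩
  | appR _ ih => exact ⟨ht.1, ih ht.2⟩
  | lam _ ih => exact ih ht
  | esubL | esubR => exact ht.elim

theorem reflTransGen_bStep_app_parlm {a : Tm} (s : Tm) (ha : IsPure a) :
    ReflTransGen BStep (app (parlm a) (parlm s)) (parlm (app a s)) := by
  cases a with
  | var | app => rfl
  | lam x v => exact ReflTransGen.single (Ctx.root BRoot.B)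
  | esub => exact ha.elim

theorem reflTransGen_bStep_parlm {t : Tm} (ht : IsPure t) : ReflTransGen BStep t (parlm t) := by
  induction t with
  | var x => rfl
  | lam x v ih => exact Ctx.reflTransGen_lam x (ih ht)
  | app a s iha ihs =>
    calc ReflTransGen BStep (app a s) (app (parlm a) s) := Ctx.reflTransGen_appL s (iha ht.1)
      ReflTransGen BStep _ (app (parlm a) (parlm s)) := Ctx.reflTransGen_appR _ (ihs ht.2)
      ReflTransGen BStep _ (parlm (app a s)) := reflTransGen_bStep_app_parlm s ht.1
  | esub => exact ht.elim


theorem BStep.reflTransGen_lsubStep {a b : Tm} (h : ReflTransGen BStep a b) :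
    ReflTransGen LsubStep a b :=
  ReflTransGen.mono (fun _ _ => BStep.lsubStep) _ _ h

theorem exists_repl_parlm {x : ℕ} {u t t' : Tm} (ht : IsPure t) (hu : IsPure u)
    (h : Repl x u t t') : ∃ w, Repl x (parlm u) (parlm t) w ∧ ReflTransGen BStep w (parlm t') := by
  induction t using parlm.induct generalizing t' with
  | case1 => cases h; exact ⟨_, Repl.var, ReflTransGen.refl⟩
  | case2 y v ih =>
    cases h with
    | lam hy hyu hv =>
      obtain ⟨w, hw, hw'⟩ := ih ht hv
      exact ⟨lam y w, Repl.lam hy (by rwa [fv_parlm]) hw, Ctx.reflTransGen_lam y hw'⟩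
  | case3 => exact ht.elim
  | case4 y v s ihv ihs =>
    cases h with
    | appL ha =>
      cases ha with
      | lam hy hyu hv =>
        obtain ⟨w, hw, hw'⟩ := ihv ht.1 hv
        exact ⟨esub y w (parlm s), Repl.esubL hy (by rwa [fv_parlm]) hw,
          Ctx.reflTransGen_esubL y _ hw'⟩
    | appR hs =>
      obtain ⟨w, hw, hw'⟩ := ihs ht.2 hs
      exact ⟨esub y (parlm v) w, Repl.esubR hw, Ctx.reflTransGen_esubR y _ hw'⟩
  | case5 y s ihs =>
    cases h with
    | appL ha =>
      cases ha
      exact ⟨app (parlm u) (parlm s), Repl.appL Repl.var, reflTransGen_bStep_app_parlm s hu⟩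
    | appR hs =>
      obtain ⟨w, hw, hw'⟩ := ihs ht.2 hs
      exact ⟨app (var y) w, Repl.appR hw, Ctx.reflTransGen_appR _ hw'⟩
  | case6 p q s iha ihs =>
    cases h with
    | appL ha =>
      obtain ⟨w, hw, hw'⟩ := iha ht.1 ha
      exact ⟨app w (parlm s), Repl.appL hw, (Ctx.reflTransGen_appL _ hw').trans
        (reflTransGen_bStep_app_parlm s (ha.isPure ht.1 hu))⟩
    | appR hs =>
      obtain ⟨w, hw, hw'⟩ := ihs ht.2 hs
      exact ⟨app (parlm (app p q)) w, Repl.appR hw, Ctx.reflTransGen_appR _ hw'⟩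
  | case7 => exact ht.1.elim

theorem LparStep.transGen_lsubStep_parlm {t t' : Tm} (ht : IsPure t) (h : LparStep t t') :
    TransGen LsubStep (parlm t) (parlm t') := by
  induction t using parlm.induct generalizing t' with
  | case1 => cases h with | root r => cases r
  | case2 y v ih =>
    cases h with
    | root r => cases r
    | lam hv => exact Ctx.transGen_lam y (ih ht hv)
  | case3 => exact ht.elim
  | case4 y v s ihv ihs =>
    cases h with
    | root r =>
      cases r with
      | betaP hr =>
        obtain ⟨w, hw, hw'⟩ := exists_repl_parlm (show IsPure v from ht.1) ht.2 hr
        exact TransGen.head' (Ctx.root (LsubRoot.R hw))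
          (Ctx.reflTransGen_esubL y _ (BStep.reflTransGen_lsubStep hw'))
      | BGc hx => exact TransGen.single (Ctx.root (LsubRoot.Gc (by rwa [fv_parlm])))
    | appL ha =>
      cases ha with
      | root r => cases r
      | lam hv => exact Ctx.transGen_esubL y _ (ihv ht.1 hv)
    | appR hs => exact Ctx.transGen_esubR y _ (ihs ht.2 hs)
  | case5 y s ihs =>
    cases h with
    | root r => cases r
    | appL ha => cases ha with | root r => cases r
    | appR hs => exact Ctx.transGen_appR _ (ihs ht.2 hs)
  | case6 p q s iha ihs =>
    cases h with
    | root r => cases r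
    | appL ha =>
      exact (Ctx.transGen_appL _ (iha ht.1 ha)).trans_left
        (BStep.reflTransGen_lsubStep (reflTransGen_bStep_app_parlm s (LparStep.isPure ht.1 ha)))
    | appR hs => exact Ctx.transGen_appR _ (ihs ht.2 hs)
  | case7 => exact ht.1.elim

theorem sn_lpar_of_sn_lsub_parlm {t : Tm} (ht : IsPure t) (h : SN LsubStep (parlm t)) :
    SN LparStep t :=
  Acc.of_transGen_simulation IsPure parlm (fun _ _ => LparStep.isPure)
    (fun _ _ => LparStep.transGen_lsubStep_parlm) ht h

end Tm

/-- for pure λ-terms, λpar-strong normalisation and λsub-strong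
normalisation coincide -/
theorem sn_lpar_iff_sn_lsub (t : Tm) (hpure : Tm.IsPure t) :
    Tm.SN Tm.LparStep t ↔ Tm.SN Tm.LsubStep t := by
  constructor
  · intro h
    rw [← Tm.unf_of_isPure hpure] at h
    exact Tm.sn_lsub_of_sn_lpar_unf h
  · intro h
    exact Tm.sn_lpar_of_sn_lsub_parlm hpure
      (h.of_reflTransGen (Tm.BStep.reflTransGen_lsubStep (Tm.reflTransGen_bStep_parlm hpure)))
end

section
/- If A₁∩…∩Aₙ ≪ B₁∩…∩Bₘ, where none of the Aᵢ or Bⱼ is an intersection type, then for each Bⱼ there exists some Aᵢ with Bⱼ = Aᵢ. -/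
namespace Ty

/-- the set of intersection-free leaves of a type -/
def atoms : Ty → Set Ty
  | inter A B => atoms A ∪ atoms B
  | A => {A}

lemma atoms_subset_of_le {A B : Ty} (h : Le A B) : atoms B ⊆ atoms A := by
  induction h with
  | refl => exact le_refl _
  | interL => exact Set.subset_union_left
  | interR => exact Set.subset_union_right
  | trans _ _ ih1 ih2 => exact ih2.trans ih1
  | pair _ _ ih1 ih2 => exact Set.union_subset ih1 ih2

lemma atoms_interFree {A : Ty} (h : IsInterFree A) : atoms A = {A} := by
  cases A with
  | base n => rfl
  | arrow _ _ => rfl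
  | inter _ _ => exact absurd h (by simp [IsInterFree])

lemma mem_atoms_bigInter {C a : Ty} {l : List Ty} :
    C ∈ atoms (bigInter a l) ↔ ∃ A ∈ a :: l, C ∈ atoms A := by
  induction l generalizing a with
  | nil => simp [bigInter]
  | cons x xs ih =>
    have : bigInter a (x :: xs) = bigInter (inter a x) xs := rfl
    rw [this, ih]
    constructor
    · rintro ⟨A, hA, hC⟩
      simp only [List.mem_cons] at hA
      rcases hA with h | h
      · subst h
        rcases hC with h | h
        · exact ⟨a, by simp, h⟩
        · exact ⟨x, by simp, h⟩
      · exact ⟨A, by simp [h], hC⟩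
    · rintro ⟨A, hA, hC⟩
      simp only [List.mem_cons] at hA
      rcases hA with h | h | h
      · exact ⟨inter a x, by simp, Or.inl (h ▸ hC)⟩
      · exact ⟨inter a x, by simp, Or.inr (h ▸ hC)⟩
      · exact ⟨A, by simp [h], hC⟩

end Ty

/-- ≪ between intersections of non-intersection types forces
each right component to equal some left component -/
theorem le_inter_components (a : Ty) (as : List Ty) (b : Ty) (bs : List Ty)
    (ha : ∀ A ∈ a :: as, Ty.IsInterFree A) (hb : ∀ B ∈ b :: bs, Ty.IsInterFree B)
    (h : Ty.Le (Ty.bigInter a as) (Ty.bigInter b bs)) :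
    ∀ B ∈ b :: bs, ∃ A ∈ a :: as, B = A := by
  intro B hB
  have hBmem : B ∈ Ty.atoms (Ty.bigInter b bs) := by
    rw [Ty.mem_atoms_bigInter]
    exact ⟨B, hB, by rw [Ty.atoms_interFree (hb B hB)]; rfl⟩
  have := Ty.atoms_subset_of_le h hBmem
  rw [Ty.mem_atoms_bigInter] at this
  obtain ⟨A, hA, hBA⟩ := this
  rw [Ty.atoms_interFree (ha A hA)] at hBA
  exact ⟨A, hA, hBA⟩
end
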